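/- Let Γ be a free product and suppose γ ∈ S_Γ^c · S_Γ^c has reduced form x_1⋯x_n with n ≥ 2 such that x_1 and x_n lie in different factors. Then the reduced form of γ can be written as μ z_0 μ⁻¹ ν z_1 ν⁻¹ for some μ, ν ∈ Γ and non-trivial letters z_0, z_1 ∈ X_Γ. -/

import Mathlib

open Monoid

open scoped Classical in
/-- The list of letters of the unique reduced form of an element of a free product. -/
noncomputable def FP.letters {ι : Type*} {G : ι → Type*} [∀ i, Group (G i)]
    (γ : CoprodI G) : List (Σ i, G i) :=
  (CoprodI.Word.equiv (M := G) γ).toList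

/-- The word length of an element of a free product. -/
noncomputable def FP.wlen {ι : Type*} {G : ι → Type*} [∀ i, Group (G i)]
    (γ : CoprodI G) : ℕ :=
  (FP.letters γ).length

/-- An element is cyclically reduced if its reduced form `x₁ ⋯ xₙ` has `n ≤ 1` or
`x₁ ≠ xₙ⁻¹`. -/
noncomputable def FP.CyclicallyReduced {ι : Type*} {G : ι → Type*} [∀ i, Group (G i)]
    (γ : CoprodI G) : Prop :=
  FP.wlen γ ≤ 1 ∨ ∀ h : FP.letters γ ≠ [],
    CoprodI.of ((FP.letters γ).head h).2 ≠ (CoprodI.of (((FP.letters γ).getLast h)).2)⁻¹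

namespace FP

variable {ι : Type*} {G : ι → Type*} [∀ i, Group (G i)]

/-- evaluate a list of letters as a group element -/
def mk (ℓ : List (Σ i, G i)) : CoprodI G :=
  (ℓ.map fun l => CoprodI.of l.2).prod

def Red (ℓ : List (Σ i, G i)) : Prop :=
  (∀ l ∈ ℓ, l.2 ≠ 1) ∧ ℓ.IsChain fun l l' => l.1 ≠ l'.1

@[simp] lemma mk_nil : mk ([] : List (Σ i, G i)) = 1 := rfl

lemma mk_cons (x : Σ i, G i) (ℓ : List (Σ i, G i)) :
    mk (x :: ℓ) = CoprodI.of x.2 * mk ℓ := by simp [mk]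

lemma mk_append (ℓ₁ ℓ₂ : List (Σ i, G i)) : mk (ℓ₁ ++ ℓ₂) = mk ℓ₁ * mk ℓ₂ := by
  simp [mk]

lemma mk_singleton (x : Σ i, G i) : mk [x] = CoprodI.of x.2 := by simp [mk]

open scoped Classical in
lemma letters_mk (ℓ : List (Σ i, G i)) (h : Red ℓ) : letters (mk ℓ) = ℓ := by
  classical
  let w : CoprodI.Word G := ⟨ℓ, h.1, h.2⟩
  have h1 : mk ℓ = CoprodI.Word.prod w := by
    simp [mk, CoprodI.Word.prod, w]
  have h2 : mk ℓ = (CoprodI.Word.equiv (M := G)).symm w := h1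
  show (CoprodI.Word.equiv (M := G) (mk ℓ)).toList = ℓ
  rw [h2, Equiv.apply_symm_apply]

open scoped Classical in
lemma red_letters (γ : CoprodI G) : Red (letters γ) :=
  ⟨(CoprodI.Word.equiv (M := G) γ).ne_one, (CoprodI.Word.equiv (M := G) γ).chain_ne⟩

open scoped Classical in
lemma mk_letters (γ : CoprodI G) : mk (letters γ) = γ := by
  have : mk (letters γ) = CoprodI.Word.prod (CoprodI.Word.equiv (M := G) γ) := by
    simp [mk, CoprodI.Word.prod, letters]
  rw [this]
  exact (CoprodI.Word.equiv (M := G)).symm_apply_apply γ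

lemma wlen_mk (ℓ : List (Σ i, G i)) (h : Red ℓ) : wlen (mk ℓ) = ℓ.length := by
  rw [wlen, letters_mk ℓ h]

@[simp] lemma letters_one : letters (1 : CoprodI G) = [] :=
  letters_mk [] ⟨by simp, List.isChain_nil⟩

@[simp] lemma wlen_one : wlen (1 : CoprodI G) = 0 := by simp [wlen]

lemma eq_one_of_letters_eq_nil {γ : CoprodI G} (h : letters γ = []) : γ = 1 := by
  have := mk_letters γ; rw [h] at this; simpa using this.symm

set_option linter.unusedSectionVars false




def inva (l : Σ i, G i) : Σ i, G i := ⟨l.1, l.2⁻¹⟩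

def invr (ℓ : List (Σ i, G i)) : List (Σ i, G i) := ℓ.reverse.map inva

@[simp] lemma inva_fst (l : Σ i, G i) : (inva l).1 = l.1 := rfl

@[simp] lemma invr_nil : invr ([] : List (Σ i, G i)) = [] := rfl

lemma invr_cons (x : Σ i, G i) (ℓ : List (Σ i, G i)) :
    invr (x :: ℓ) = invr ℓ ++ [inva x] := by simp [invr]

@[simp] lemma length_invr (ℓ : List (Σ i, G i)) : (invr ℓ).length = ℓ.length := by
  simp [invr]

lemma head?_invr (ℓ : List (Σ i, G i)) : (invr ℓ).head? = ℓ.getLast?.map inva := by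
  simp [invr, List.head?_reverse, List.head?_map]

lemma getLast?_invr (ℓ : List (Σ i, G i)) : (invr ℓ).getLast? = ℓ.head?.map inva := by
  simp [invr, List.getLast?_map, List.getLast?_reverse]

lemma red_invr {ℓ : List (Σ i, G i)} (h : Red ℓ) : Red (invr ℓ) := by
  constructor
  · intro l hl
    simp only [invr, List.mem_map, List.mem_reverse] at hl
    obtain ⟨x, hx, rfl⟩ := hl
    exact inv_ne_one.2 (h.1 x hx)
  · rw [invr, List.isChain_map, List.isChain_reverse]
    exact h.2.imp fun a b h => h.symm

/-- junction condition -/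
def J (ℓ₁ ℓ₂ : List (Σ i, G i)) : Prop :=
  ∀ x ∈ ℓ₁.getLast?, ∀ y ∈ ℓ₂.head?, x.1 ≠ y.1

lemma red_append {ℓ₁ ℓ₂ : List (Σ i, G i)} :
    Red (ℓ₁ ++ ℓ₂) ↔ Red ℓ₁ ∧ Red ℓ₂ ∧ J ℓ₁ ℓ₂ := by
  simp only [Red, List.isChain_append, J, List.mem_append]
  constructor
  · rintro ⟨h1, h2, h3, h4⟩
    exact ⟨⟨fun l hl => h1 l (Or.inl hl), h2⟩, ⟨fun l hl => h1 l (Or.inr hl), h3⟩, h4⟩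
  · rintro ⟨⟨a1, a2⟩, ⟨b1, b2⟩, hj⟩
    exact ⟨fun l hl => hl.elim (a1 l) (b1 l), a2, b2, hj⟩

lemma J_nil_left (ℓ : List (Σ i, G i)) : J [] ℓ := by simp [J]
lemma J_nil_right (ℓ : List (Σ i, G i)) : J ℓ [] := by simp [J]





lemma mk_invr (ℓ : List (Σ i, G i)) : mk (invr ℓ) = (mk ℓ)⁻¹ := by
  induction ℓ with
  | nil => simp
  | cons x ℓ ih =>
      rw [invr_cons, mk_append, ih, mk_cons]
      simp [mk, inva, mul_inv_rev]
      exact MonoidHom.map_inv CoprodI.of x.snd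

/-- the conjugate word `a (i,z) a⁻¹` -/
def cw (a : List (Σ i, G i)) (i : ι) (z : G i) : List (Σ i, G i) :=
  a ++ ⟨i, z⟩ :: invr a

lemma mk_cw (a : List (Σ i, G i)) (i : ι) (z : G i) :
    mk (cw a i z) = mk a * CoprodI.of z * (mk a)⁻¹ := by
  rw [cw, mk_append, ← mk_invr]
  rw [show (⟨i,z⟩ :: invr a : List (Σ i, G i)) = [⟨i,z⟩] ++ invr a from rfl, mk_append,
    mk_singleton, mul_assoc]

lemma length_cw (a : List (Σ i, G i)) (i : ι) (z : G i) :
    (cw a i z).length = 2 * a.length + 1 := by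
  simp [cw]; ring

lemma red_cw {a : List (Σ i, G i)} {i : ι} {z : G i} (ha : Red a) (hz : z ≠ 1)
    (hl : ∀ x ∈ a.getLast?, x.1 ≠ i) : Red (cw a i z) := by
  rw [cw, show (⟨i,z⟩ :: invr a : List (Σ i, G i)) = [⟨i,z⟩] ++ invr a from rfl,
    ← List.append_assoc, red_append, red_append]
  refine ⟨⟨ha, ⟨by simpa using hz, List.isChain_singleton _⟩, ?_⟩, red_invr ha, ?_⟩
  · intro x hx y hy
    simp only [List.head?_cons, Option.mem_def, Option.some.injEq] at hy
    subst hy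
    exact hl x hx
  · intro x hx y hy
    have : x = ⟨i, z⟩ := by
      rcases List.mem_getLast?_eq_getLast hx with ⟨h1, h2⟩
      simp [h2, List.getLast_append]
    subst this
    rw [head?_invr] at hy
    simp only [Option.mem_def, Option.map_eq_some_iff] at hy
    obtain ⟨p, hp, rfl⟩ := hy
    exact fun h => hl p hp h.symm


lemma red_tail {x : Σ i, G i} {ℓ : List (Σ i, G i)} (h : Red (x :: ℓ)) : Red ℓ :=
  ⟨fun l hl => h.1 l (List.mem_cons_of_mem _ hl), h.2.tail⟩

lemma red_cons {x : Σ i, G i} {ℓ : List (Σ i, G i)} (hx : x.2 ≠ 1)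
    (hℓ : Red ℓ) (hj : ∀ y ∈ ℓ.head?, x.1 ≠ y.1) : Red (x :: ℓ) := by
  refine ⟨?_, List.isChain_cons.2 ⟨hj, hℓ.2⟩⟩
  intro l hl
  rcases List.mem_cons.1 hl with rfl | hl
  · exact hx
  · exact hℓ.1 l hl

lemma letters_inv (γ : CoprodI G) : letters γ⁻¹ = invr (letters γ) := by
  have h1 : mk (invr (letters γ)) = γ⁻¹ := by rw [mk_invr, mk_letters]
  rw [← h1, letters_mk _ (red_invr (red_letters γ))]

lemma wlen_inv (γ : CoprodI G) : wlen γ⁻¹ = wlen γ := by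
  rw [wlen, letters_inv, length_invr, wlen]

lemma wlen_of_mul {i : ι} (x : G i) (τ : CoprodI G) :
    wlen (CoprodI.of x * τ) ≤ wlen τ + 1 := by
  by_cases hx : x = 1
  · subst hx; simp
  rcases h : letters τ with _ | ⟨y, m⟩
  · have : τ = 1 := eq_one_of_letters_eq_nil h
    subst this
    rw [mul_one]
    have : letters (CoprodI.of x) = [⟨i, x⟩] := by
      rw [show CoprodI.of x = mk [⟨i, x⟩] from (mk_singleton ⟨i, x⟩).symm]
      exact letters_mk _ ⟨by simpa using hx, List.isChain_singleton _⟩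
    simp [wlen, this]
  · have hred : Red (y :: m) := h ▸ red_letters τ
    have hτ : τ = CoprodI.of y.2 * mk m := by
      conv_lhs => rw [← mk_letters τ, h, mk_cons]
    have hwτ : wlen τ = m.length + 1 := by simp [wlen, h]
    by_cases hy : y.1 = i
    · obtain ⟨k, u⟩ := y
      dsimp at hy
      subst hy
      by_cases hxu : x * u = 1
      · have key : CoprodI.of x * τ = mk m := by
          rw [hτ]; dsimp; rw [← mul_assoc, ← MonoidHom.map_mul, hxu,
            MonoidHom.map_one, one_mul]
        rw [key, wlen_mk _ (red_tail hred)]; omega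
      · have key : CoprodI.of x * τ = mk (⟨k, x * u⟩ :: m) := by
          rw [hτ]; dsimp; rw [← mul_assoc, ← MonoidHom.map_mul, mk_cons]
        rw [key, wlen_mk]
        · simp; omega
        · exact red_cons hxu (red_tail hred) (List.isChain_cons.1 hred.2).1
    · have key : CoprodI.of x * τ = mk (⟨i, x⟩ :: y :: m) := by
        rw [hτ, mk_cons, mk_cons, ← mul_assoc]
      rw [key, wlen_mk]
      · simp; omega
      · exact red_cons hx hred (by simpa using fun h' => hy h'.symm)

lemma wlen_mk_mul_le (ℓ : List (Σ i, G i)) : ∀ τ : CoprodI G,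
    wlen (mk ℓ * τ) ≤ ℓ.length + wlen τ := by
  induction ℓ with
  | nil => simp
  | cons x ℓ ih =>
      intro τ
      rw [mk_cons, mul_assoc]
      have h1 := wlen_of_mul x.2 (mk ℓ * τ)
      have h2 := ih τ
      simp only [List.length_cons]
      omega

lemma wlen_mul_le (σ τ : CoprodI G) : wlen (σ * τ) ≤ wlen σ + wlen τ := by
  conv_lhs => rw [← mk_letters σ]
  exact wlen_mk_mul_le (letters σ) τ

lemma red_of_prefix {ℓ₁ ℓ₂ : List (Σ i, G i)} (h : Red (ℓ₁ ++ ℓ₂)) : Red ℓ₁ :=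
  (red_append.1 h).1

lemma conj_ne_one {i : ι} {v z : G i} (hz : z ≠ 1) : v * z * v⁻¹ ≠ 1 := by
  intro h
  apply hz
  have : v * z * v⁻¹ = v * 1 * v⁻¹ := by rw [h]; group
  exact mul_left_cancel (mul_right_cancel this)

lemma conj_form (N : ℕ) : ∀ (g : CoprodI G), wlen g ≤ N → ∀ (i : ι) (z : G i), z ≠ 1 →
    ∃ (a : List (Σ i, G i)) (j : ι) (u : G j), Red a ∧ u ≠ 1 ∧
      (∀ x ∈ a.getLast?, x.1 ≠ j) ∧
      g * CoprodI.of z * g⁻¹ = mk a * CoprodI.of u * (mk a)⁻¹ ∧ a.length ≤ wlen g := by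
  induction N with
  | zero =>
      intro g hg i z hz
      have h0 : letters g = [] := List.length_eq_zero_iff.1 (Nat.le_zero.1 hg)
      exact ⟨letters g, i, z, red_letters g, hz, by simp [h0], by rw [mk_letters], le_refl _⟩
  | succ N ih =>
      intro g hg i z hz
      by_cases hc : ∀ x ∈ (letters g).getLast?, x.1 ≠ i
      · exact ⟨letters g, i, z, red_letters g, hz, hc, by rw [mk_letters], le_refl _⟩
      · push_neg at hc
        obtain ⟨x, hx, hxi⟩ := hc
        have hne : letters g ≠ [] := by
          intro h0; rw [h0] at hx; simp at hx
        have hxval : x = (letters g).getLast hne := by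
          rw [List.getLast?_eq_getLast hne] at hx
          exact Option.some_injective _ hx.symm
        obtain ⟨k, v⟩ := x
        dsimp at hxi
        subst hxi
        set d := (letters g).dropLast with hd
        have hsplit : letters g = d ++ [⟨k, v⟩] := by
          rw [hxval, hd]
          exact (List.dropLast_append_getLast hne).symm
        have hredd : Red d := red_of_prefix (hsplit ▸ red_letters g)
        have hgeq : g = mk d * CoprodI.of v := by
          conv_lhs => rw [← mk_letters g, hsplit, mk_append, mk_singleton]
        have hlen : wlen (mk d) ≤ N := by
          rw [wlen_mk _ hredd]
          have : (letters g).length ≤ N + 1 := hg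
          have : (letters g).length = d.length + 1 := by rw [hsplit]; simp
          omega
        obtain ⟨a, j, u, ha, hu, hac, heq, hal⟩ :=
          ih (mk d) hlen k (v * z * v⁻¹) (conj_ne_one hz)
        refine ⟨a, j, u, ha, hu, hac, ?_, ?_⟩
        · rw [hgeq, ← heq, MonoidHom.map_mul, MonoidHom.map_mul, MonoidHom.map_inv]
          group
        · calc a.length ≤ wlen (mk d) := hal
            _ ≤ wlen g := by
              rw [wlen_mk _ hredd, wlen, hsplit]; simp

/-- `n`-fold repetition of a list -/
def repl (n : ℕ) (dl : List (Σ i, G i)) : List (Σ i, G i) := (List.replicate n dl).flatten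

@[simp] lemma repl_zero (dl : List (Σ i, G i)) : repl 0 dl = [] := rfl

lemma repl_succ (n : ℕ) (dl : List (Σ i, G i)) : repl (n+1) dl = dl ++ repl n dl := by
  simp [repl, List.replicate_succ]

lemma repl_succ' (n : ℕ) (dl : List (Σ i, G i)) : repl (n+1) dl = repl n dl ++ dl := by
  simp [repl, List.replicate_succ']

lemma length_repl (n : ℕ) (dl : List (Σ i, G i)) : (repl n dl).length = n * dl.length := by
  induction n with
  | zero => simp
  | succ n ih => rw [repl_succ]; simp [ih]; ring

lemma mk_repl (n : ℕ) (dl : List (Σ i, G i)) : mk (repl n dl) = (mk dl) ^ n := by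
  induction n with
  | zero => simp
  | succ n ih => rw [repl_succ, mk_append, ih, pow_succ']

lemma head?_repl {n : ℕ} {dl : List (Σ i, G i)} {y : Σ i, G i}
    (h : y ∈ (repl n dl).head?) : y ∈ dl.head? := by
  induction n with
  | zero => simp [repl] at h
  | succ n ih =>
      rw [repl_succ, List.head?_append] at h
      rcases Option.or_eq_some_iff.1 h with h' | ⟨_, h'⟩
      · exact h'
      · exact ih h'

lemma getLast?_repl {n : ℕ} {dl : List (Σ i, G i)} {y : Σ i, G i}
    (h : y ∈ (repl n dl).getLast?) : y ∈ dl.getLast? := by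
  induction n with
  | zero => simp [repl] at h
  | succ n ih =>
      rw [repl_succ', List.getLast?_append] at h
      rcases Option.or_eq_some_iff.1 h with h' | ⟨_, h'⟩
      · exact h'
      · exact ih h'

lemma red_repl {dl : List (Σ i, G i)} (h : Red dl)
    (hc : ∀ x ∈ dl.getLast?, ∀ y ∈ dl.head?, x.1 ≠ y.1) (n : ℕ) : Red (repl n dl) := by
  induction n with
  | zero => exact ⟨by simp, List.isChain_nil⟩
  | succ n ih =>
      rw [repl_succ, red_append]
      exact ⟨h, ih, fun x hx y hy => hc x hx y (head?_repl hy)⟩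

lemma wlen_pow {dl : List (Σ i, G i)} (h : Red dl)
    (hc : ∀ x ∈ dl.getLast?, ∀ y ∈ dl.head?, x.1 ≠ y.1) (n : ℕ) :
    wlen ((mk dl) ^ n) = n * dl.length := by
  rw [← mk_repl, wlen_mk _ (red_repl h hc n), length_repl]

lemma conj_pow_grp {H : Type*} [Group H] (a b : H) (n : ℕ) :
    (a * b * a⁻¹) ^ n = a * b ^ n * a⁻¹ := by
  induction n with
  | zero => simp
  | succ n ih => rw [pow_succ, pow_succ, ih]; group

lemma getLast?_cons_of_ne_nil (x : Σ i, G i) {l : List (Σ i, G i)} (h : l ≠ []) :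
    (x :: l).getLast? = l.getLast? := by
  cases l with
  | nil => exact absurd rfl h
  | cons a l => simp

lemma head?_append_of_ne_nil' {l₁ l₂ : List (Σ i, G i)} (h : l₁ ≠ []) :
    (l₁ ++ l₂).head? = l₁.head? := by
  cases l₁ with
  | nil => exact absurd rfl h
  | cons a l => simp

lemma stepA (N : ℕ)
    (IH : ∀ (g : CoprodI G), wlen g ≤ N → ∀ dl : List (Σ i, G i), Red dl → 2 ≤ dl.length →
      (∀ x ∈ dl.getLast?, ∀ y ∈ dl.head?, x.1 ≠ y.1) →
      ∀ n, 1 ≤ n → n ≤ wlen (g * (mk dl) ^ n * g⁻¹))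
    (m' : List (Σ i, G i)) (k : ι) (tv : G k) (hg : Red (m' ++ [⟨k, tv⟩]))
    (hmN : m'.length ≤ N)
    (dl' : List (Σ i, G i)) (hv : G k) (hdl : Red (⟨k, hv⟩ :: dl'))
    (h2 : 2 ≤ (⟨k, hv⟩ :: dl').length)
    (hc : ∀ x ∈ ((⟨k, hv⟩ : Σ i, G i) :: dl').getLast?,
      ∀ y ∈ ((⟨k, hv⟩ : Σ i, G i) :: dl').head?, x.1 ≠ y.1)
    (n : ℕ) (hn : 1 ≤ n) :
    n ≤ wlen (mk m' * CoprodI.of tv * (mk (⟨k, hv⟩ :: dl')) ^ n *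
      (mk m' * CoprodI.of tv)⁻¹) := by
  set dl : List (Σ i, G i) := ⟨k, hv⟩ :: dl' with hdldef
  have hdl' : dl' ≠ [] := by
    intro h; rw [hdldef, h] at h2; simp at h2
  have hdl'len : 1 ≤ dl'.length := List.length_pos_iff.2 hdl'
  have htv1 : tv ≠ 1 := hg.1 ⟨k, tv⟩ (by simp)
  have hhv1 : hv ≠ 1 := hdl.1 ⟨k, hv⟩ (by simp [hdldef])
  have hjm : ∀ x ∈ m'.getLast?, x.1 ≠ k := by
    intro x hx
    exact (red_append.1 hg).2.2 x hx ⟨k, tv⟩ (by simp)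
  have hlak : ∀ x ∈ dl'.getLast?, x.1 ≠ k := by
    intro x hx
    exact hc x (by rw [hdldef, getLast?_cons_of_ne_nil _ hdl']; exact hx) ⟨k, hv⟩
      (by rw [hdldef]; rfl)
  have hchain : ∀ y ∈ dl'.head?, k ≠ y.1 := by
    have := hdl.2
    rw [hdldef] at this
    exact (List.isChain_cons.1 this).1
  have hredm' : Red m' := red_of_prefix hg
  have hwm' : wlen (mk m') ≤ N := by rw [wlen_mk _ hredm']; exact hmN
  by_cases htv : tv * hv = 1
  · -- cancellation case
    set dl'' : List (Σ i, G i) := dl' ++ [⟨k, tv⁻¹⟩] with hdl''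
    have key : CoprodI.of tv * mk dl * (CoprodI.of tv)⁻¹ = mk dl'' := by
      rw [hdldef, mk_cons, hdl'', mk_append, mk_singleton]
      rw [← mul_assoc, ← MonoidHom.map_mul, htv, MonoidHom.map_one, one_mul]
      rw [MonoidHom.map_inv]
    have geq : mk m' * CoprodI.of tv * (mk dl) ^ n * (mk m' * CoprodI.of tv)⁻¹ =
        mk m' * (mk dl'') ^ n * (mk m')⁻¹ := by
      rw [← key, conj_pow_grp]
      group
    rw [geq]
    refine IH (mk m') hwm' dl'' ?_ ?_ ?_ n hn
    · exact red_append.2 ⟨red_tail hdl, ⟨by simpa using inv_ne_one.2 htv1,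
        List.isChain_singleton _⟩, fun x hx y hy => by
          simp only [List.head?_cons, Option.mem_def, Option.some.injEq] at hy
          subst hy; exact hlak x hx⟩
    · rw [hdl'']; simp; omega
    · intro x hx y hy
      rw [hdl'', List.getLast?_concat] at hx
      rw [hdl'', head?_append_of_ne_nil' hdl'] at hy
      simp only [Option.mem_def, Option.some.injEq] at hx
      subst hx
      exact fun h => hchain y hy h
  · -- amalgamation case
    obtain ⟨n', rfl⟩ : ∃ n', n = n' + 1 := ⟨n - 1, by omega⟩
    set B : List (Σ i, G i) :=
      m' ++ (⟨k, tv * hv⟩ :: (dl' ++ (repl n' dl ++ (⟨k, tv⁻¹⟩ :: invr m')))) with hB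
    have R1 : Red (invr m') := red_invr hredm'
    have R2 : Red (⟨k, tv⁻¹⟩ :: invr m') := by
      refine red_cons (by simpa using inv_ne_one.2 htv1) R1 ?_
      intro y hy
      rw [head?_invr] at hy
      simp only [Option.mem_def, Option.map_eq_some_iff] at hy
      obtain ⟨p, hp, rfl⟩ := hy
      exact fun h => hjm p hp h.symm
    have R3 : Red (repl n' dl ++ (⟨k, tv⁻¹⟩ :: invr m')) := by
      refine red_append.2 ⟨red_repl hdl hc n', R2, ?_⟩
      intro x hx y hy
      simp only [List.head?_cons, Option.mem_def, Option.some.injEq] at hy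
      subst hy
      have := getLast?_repl hx
      rw [hdldef, getLast?_cons_of_ne_nil _ hdl'] at this
      exact hlak x this
    have R4 : Red (dl' ++ (repl n' dl ++ (⟨k, tv⁻¹⟩ :: invr m'))) := by
      refine red_append.2 ⟨red_tail hdl, R3, ?_⟩
      intro x hx y hy
      have hyk : y.1 = k := by
        rw [List.head?_append] at hy
        rcases Option.or_eq_some_iff.1 hy with h' | ⟨_, h'⟩
        · have := head?_repl h'
          rw [hdldef] at this
          simp only [List.head?_cons, Option.mem_def, Option.some.injEq] at this
          subst this; rfl
        · simp only [List.head?_cons, Option.mem_def, Option.some.injEq] at h'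
          subst h'; rfl
      rw [hyk]
      exact hlak x hx
    have R5 : Red (⟨k, tv * hv⟩ :: (dl' ++ (repl n' dl ++ (⟨k, tv⁻¹⟩ :: invr m')))) := by
      refine red_cons htv R4 ?_
      intro y hy
      rw [head?_append_of_ne_nil' hdl'] at hy
      exact hchain y hy
    have R6 : Red B := by
      refine red_append.2 ⟨hredm', R5, ?_⟩
      intro x hx y hy
      simp only [List.head?_cons, Option.mem_def, Option.some.injEq] at hy
      subst hy
      exact hjm x hx
    have e1 : mk dl = CoprodI.of hv * mk dl' := by rw [hdldef, mk_cons]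
    have e2 : mk dl * (mk dl) ^ n' = CoprodI.of hv * (mk dl' * (mk dl) ^ n') := by
      nth_rewrite 1 [e1]
      rw [mul_assoc]
    have eB : mk B = mk m' * (CoprodI.of (tv * hv) * (mk dl' *
        ((mk dl) ^ n' * (CoprodI.of tv⁻¹ * (mk m')⁻¹)))) := by
      rw [hB]
      simp only [mk_append, mk_cons, mk_repl, mk_invr, mul_assoc]
    have keyB : mk m' * CoprodI.of tv * (mk dl) ^ (n' + 1) * (mk m' * CoprodI.of tv)⁻¹
        = mk B := by
      rw [eB, pow_succ', e2]
      simp only [MonoidHom.map_mul, MonoidHom.map_inv, mul_inv_rev, mul_assoc]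
    rw [keyB, wlen_mk _ R6]
    have hlenB : B.length = m'.length + 1 + dl'.length + n' * dl.length + 1 + m'.length := by
      rw [hB]; simp [length_repl]; ring
    have hdll : dl.length = dl'.length + 1 := by rw [hdldef]; rfl
    have hmul : n' * 1 ≤ n' * dl.length := Nat.mul_le_mul_left n' (by omega)
    simp only [mul_one] at hmul
    omega

lemma invr_append (l₁ l₂ : List (Σ i, G i)) : invr (l₁ ++ l₂) = invr l₂ ++ invr l₁ := by
  simp [invr]

lemma head?_repl_some {n : ℕ} (hn : 1 ≤ n) (x : Σ i, G i) (dl' : List (Σ i, G i)) :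
    (repl n (x :: dl')).head? = some x := by
  obtain ⟨n', rfl⟩ : ∃ n', n = n' + 1 := ⟨n - 1, by omega⟩
  rw [repl_succ, head?_append_of_ne_nil' (List.cons_ne_nil _ _)]
  rfl

lemma getLast?_repl_some {n : ℕ} (hn : 1 ≤ n) {dl : List (Σ i, G i)} (h : dl ≠ []) :
    (repl n dl).getLast? = dl.getLast? := by
  obtain ⟨n', rfl⟩ : ∃ n', n = n' + 1 := ⟨n - 1, by omega⟩
  rw [repl_succ', List.getLast?_append, List.getLast?_eq_getLast h]
  rfl

lemma mul_le_self' (n m : ℕ) (h : 1 ≤ m) : n ≤ n * m := by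
  calc n = n * 1 := (mul_one n).symm
    _ ≤ n * m := Nat.mul_le_mul_left n h

lemma pow_conj_lower (N : ℕ) : ∀ (g : CoprodI G), wlen g ≤ N →
    ∀ dl : List (Σ i, G i), Red dl → 2 ≤ dl.length →
    (∀ x ∈ dl.getLast?, ∀ y ∈ dl.head?, x.1 ≠ y.1) →
    ∀ n, 1 ≤ n → n ≤ wlen (g * (mk dl) ^ n * g⁻¹) := by
  induction N with
  | zero =>
      intro g hg dl hdl h2 hc n hn
      have hg1 : g = 1 := eq_one_of_letters_eq_nil (List.length_eq_zero_iff.1 (Nat.le_zero.1 hg))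
      subst hg1
      rw [one_mul, inv_one, mul_one, wlen_pow hdl hc n]
      exact mul_le_self' n _ (by omega)
  | succ N ihN =>
      intro g hg dl0 hdl h2 hc n hn
      by_cases hm0 : letters g = []
      · have hg1 : g = 1 := eq_one_of_letters_eq_nil hm0
        subst hg1
        rw [one_mul, inv_one, mul_one, wlen_pow hdl hc n]
        exact mul_le_self' n _ (by omega)
      cases dl0 with
      | nil => simp at h2
      | cons h dl' =>
      obtain ⟨kh, hv⟩ := h
      rcases et : (letters g).getLast hm0 with ⟨it, tv⟩
      have hsplit : letters g = (letters g).dropLast ++ [⟨it, tv⟩] := by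
        rw [← et]; exact (List.dropLast_append_getLast hm0).symm
      have hgred : Red ((letters g).dropLast ++ [⟨it, tv⟩]) := hsplit ▸ red_letters g
      have hgeq : g = mk ((letters g).dropLast) * CoprodI.of tv := by
        conv_lhs => rw [← mk_letters g, hsplit]
        rw [mk_append, mk_singleton]
      have hm'len : (letters g).dropLast.length ≤ N := by
        have h1 : (letters g).length ≤ N + 1 := hg
        have h2' := List.length_dropLast (xs := letters g)
        have hpos : 0 < (letters g).length := List.length_pos_iff.2 hm0
        omega
      have hlast? : (letters g).getLast? = some ⟨it, tv⟩ := by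
        rw [List.getLast?_eq_getLast hm0, et]
      by_cases hth : it = kh
      · subst hth
        rw [hgeq]
        exact stepA N ihN _ it tv hgred hm'len dl' hv hdl h2 hc n hn
      · rcases ela : ((⟨kh,hv⟩ :: dl' : List (Σ i, G i))).getLast (List.cons_ne_nil _ _)
          with ⟨kl, lv⟩
        have hla? : ((⟨kh,hv⟩ :: dl' : List (Σ i, G i))).getLast? = some ⟨kl, lv⟩ := by
          rw [List.getLast?_eq_getLast (List.cons_ne_nil _ _), ela]
        by_cases htl : it = kl
        · obtain rfl : it = kl := htl
          have hsplitdl : (⟨kh,hv⟩ :: dl' : List (Σ i, G i))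
              = (⟨kh,hv⟩ :: dl').dropLast ++ [⟨it,lv⟩] := by
            rw [← ela]; exact (List.dropLast_append_getLast _).symm
          have hinvr : invr (⟨kh,hv⟩ :: dl')
              = ⟨it, lv⁻¹⟩ :: invr ((⟨kh,hv⟩ :: dl' : List (Σ i, G i)).dropLast) := by
            conv_lhs => rw [hsplitdl]
            rw [invr_append]
            rfl
          have hkeyinv : wlen (g * (mk (⟨kh,hv⟩::dl'))^n * g⁻¹)
              = wlen (g * (mk (invr (⟨kh,hv⟩::dl')))^n * g⁻¹) := by
            rw [← wlen_inv (g * (mk (⟨kh,hv⟩::dl'))^n * g⁻¹)]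
            congr 1
            rw [mk_invr, inv_pow]
            group
          rw [hkeyinv, hinvr, hgeq]
          refine stepA N ihN _ it tv hgred hm'len _ lv⁻¹ ?_ ?_ ?_ n hn
          · rw [← hinvr]; exact red_invr hdl
          · have : (invr (⟨kh,hv⟩::dl' : List (Σ i, G i))).length = dl'.length + 1 := by
              rw [length_invr]; rfl
            rw [hinvr] at this
            rw [this]
            simpa using h2
          · rw [← hinvr]
            intro x hx y hy
            rw [getLast?_invr] at hx
            rw [head?_invr] at hy
            obtain ⟨p, hp, rfl⟩ := Option.map_eq_some_iff.1 (Option.mem_def.1 hx)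
            obtain ⟨q, hq, rfl⟩ := Option.map_eq_some_iff.1 (Option.mem_def.1 hy)
            exact fun hh => (hc q hq p hp) hh.symm
        · have hrepl? : (repl n ((⟨kh,hv⟩ : Σ i, G i) :: dl')).head? = some ⟨kh,hv⟩ :=
            head?_repl_some hn _ _
          have hB : g * (mk (⟨kh,hv⟩::dl'))^n * g⁻¹
              = mk (letters g ++ (repl n (⟨kh,hv⟩::dl') ++ invr (letters g))) := by
            rw [mk_append, mk_append, mk_repl, mk_invr, mk_letters, mul_assoc]
          rw [hB, wlen_mk]
          · simp only [List.length_append, length_invr, length_repl, List.length_cons]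
            have := mul_le_self' n (dl'.length + 1) (by omega)
            omega
          · refine red_append.2 ⟨red_letters g, red_append.2
              ⟨red_repl hdl hc n, red_invr (red_letters g), ?_⟩, ?_⟩
            · intro x hx y hy
              rw [getLast?_repl_some hn (List.cons_ne_nil _ _), hla?] at hx
              rw [head?_invr, hlast?] at hy
              obtain rfl := (Option.some.inj (Option.mem_def.1 hx)).symm
              obtain rfl := (Option.some.inj (Option.mem_def.1 hy)).symm
              exact fun hh => htl hh.symm
            · intro x hx y hy
              rw [hlast?] at hx
              rw [List.head?_append, hrepl?] at hy
              obtain rfl := (Option.some.inj (Option.mem_def.1 hx)).symm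
              have : y = ⟨kh, hv⟩ := by
                rcases Option.or_eq_some_iff.1 (Option.mem_def.1 hy) with h' | ⟨h', _⟩
                · exact (Option.some.inj h').symm
                · simp at h'
              subst this
              exact hth

lemma cyc_red (N : ℕ) : ∀ σ : CoprodI G, wlen σ ≤ N → σ ≠ 1 →
    ∃ (g : CoprodI G) (dl : List (Σ i, G i)), Red dl ∧ dl ≠ [] ∧
      (2 ≤ dl.length → ∀ x ∈ dl.getLast?, ∀ y ∈ dl.head?, x.1 ≠ y.1) ∧
      σ = g * mk dl * g⁻¹ := by
  induction N with
  | zero =>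
      intro σ hσ hσ1
      exact absurd (eq_one_of_letters_eq_nil (List.length_eq_zero_iff.1 (Nat.le_zero.1 hσ))) hσ1
  | succ N ihN =>
      intro σ hσ hσ1
      have hm0 : letters σ ≠ [] := fun h => hσ1 (eq_one_of_letters_eq_nil h)
      by_cases hl1 : (letters σ).length ≤ 1
      · exact ⟨1, letters σ, red_letters σ, hm0, fun h => by omega, by
          rw [one_mul, inv_one, mul_one, mk_letters]⟩
      by_cases hcyc : ∀ x ∈ (letters σ).getLast?, ∀ y ∈ (letters σ).head?, x.1 ≠ y.1
      · exact ⟨1, letters σ, red_letters σ, hm0, fun _ => hcyc, by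
          rw [one_mul, inv_one, mul_one, mk_letters]⟩
      push_neg at hcyc
      obtain ⟨x, hx, y, hy, hxy⟩ := hcyc
      have hyval : (letters σ).head? = some ((letters σ).head hm0) := List.head?_eq_head _
      have hxval : (letters σ).getLast? = some ((letters σ).getLast hm0) :=
        List.getLast?_eq_getLast _
      rw [hxval] at hx
      rw [hyval] at hy
      obtain rfl := (Option.some.inj (Option.mem_def.1 hx)).symm
      obtain rfl := (Option.some.inj (Option.mem_def.1 hy)).symm
      have htne : (letters σ).tail ≠ [] := by
        rcases ll : letters σ with _ | ⟨a, _ | ⟨b, l⟩⟩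
        · exact absurd ll hm0
        · rw [ll] at hl1; simp at hl1
        · simp
      rcases ey : (letters σ).head hm0 with ⟨ky, yv⟩
      rcases ex : (letters σ).getLast hm0 with ⟨kx, xv⟩
      rw [ex, ey] at hxy
      simp only at hxy
      obtain rfl : kx = ky := hxy
      set mid := (letters σ).tail.dropLast with hmid
      have hgl? : (letters σ).tail.getLast? = some ⟨kx, xv⟩ := by
        have h' : (letters σ).getLast? = (letters σ).tail.getLast? := by
          conv_lhs => rw [← List.cons_head_tail hm0]
          rw [getLast?_cons_of_ne_nil _ htne]
        rw [← h', hxval, ex]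
      have hgl : (letters σ).tail.getLast htne = ⟨kx, xv⟩ := by
        have := List.getLast?_eq_getLast htne
        rw [this] at hgl?
        exact Option.some.inj hgl?
      have hsplit : letters σ = ⟨kx, yv⟩ :: (mid ++ [⟨kx, xv⟩]) := by
        conv_lhs => rw [← List.cons_head_tail hm0]
        rw [ey]
        congr 1
        rw [← hgl, hmid]
        exact (List.dropLast_append_getLast htne).symm
      have hrtail : Red (mid ++ [⟨kx, xv⟩]) := red_tail (hsplit ▸ red_letters σ)
      have hmidlen : mid.length + 2 = (letters σ).length := by
        have := congrArg List.length hsplit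
        simp at this
        omega
      have hσeq : σ = CoprodI.of yv * (mk mid * CoprodI.of xv) := by
        conv_lhs => rw [← mk_letters σ, hsplit]
        rw [mk_cons, mk_append, mk_singleton]
      by_cases h1 : xv * yv = 1
      · have hxy' : CoprodI.of xv = (CoprodI.of yv)⁻¹ := by
          rw [← MonoidHom.map_inv]
          congr 1
          exact eq_inv_of_mul_eq_one_left h1
        have hσ' : σ = CoprodI.of yv * mk mid * (CoprodI.of yv)⁻¹ := by
          rw [hσeq, hxy', mul_assoc]
        have hmne : mk mid ≠ 1 := by
          intro hh
          apply hσ1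
          rw [hσ', hh]; group
        have hwm : wlen (mk mid) ≤ N := by
          rw [wlen_mk _ (red_of_prefix hrtail)]
          have : (letters σ).length ≤ N + 1 := hσ
          omega
        obtain ⟨g, dl, a1, a2, a3, a4⟩ := ihN (mk mid) hwm hmne
        exact ⟨CoprodI.of yv * g, dl, a1, a2, a3, by
          rw [hσ', a4]; group⟩
      · have hrnew : Red (mid ++ [⟨kx, xv * yv⟩]) := by
          refine red_append.2 ⟨(red_append.1 hrtail).1, ⟨by simpa using h1,
            List.isChain_singleton _⟩, ?_⟩
          intro p hp q hq
          simp only [List.head?_cons, Option.mem_def, Option.some.injEq] at hq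
          subst hq
          exact (red_append.1 hrtail).2.2 p hp ⟨kx, xv⟩ (by simp)
        have hσ' : σ = CoprodI.of yv * mk (mid ++ [⟨kx, xv * yv⟩]) * (CoprodI.of yv)⁻¹ := by
          rw [hσeq, mk_append, mk_singleton, MonoidHom.map_mul]
          group
        have hmne : mk (mid ++ [⟨kx, xv * yv⟩]) ≠ 1 := by
          intro hh
          have := wlen_mk _ hrnew
          rw [hh] at this
          simp at this
        have hwm : wlen (mk (mid ++ [⟨kx, xv * yv⟩])) ≤ N := by
          rw [wlen_mk _ hrnew]
          have : (letters σ).length ≤ N + 1 := hσ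
          simp only [List.length_append, List.length_cons, List.length_nil]
          omega
        obtain ⟨g, dl, a1, a2, a3, a4⟩ := ihN _ hwm hmne
        exact ⟨CoprodI.of yv * g, dl, a1, a2, a3, by
          rw [hσ', a4]; group⟩

/-- characterization of elements in the complement of `S_Γ` -/
lemma sc_char (σ : CoprodI G) (hσ : ∃ n : ℕ, 1 ≤ n ∧ wlen (σ ^ n) < n) :
    σ = 1 ∨ ∃ (g : CoprodI G) (i : ι) (z : G i), z ≠ 1 ∧ σ = g * CoprodI.of z * g⁻¹ := by
  by_cases h1 : σ = 1
  · exact Or.inl h1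
  right
  obtain ⟨g, dl, hred, hne, hcyc, heq⟩ := cyc_red (wlen σ) σ le_rfl h1
  cases dl with
  | nil => exact absurd rfl hne
  | cons x dl' =>
      by_cases hd : dl' = []
      · subst hd
        obtain ⟨i, z⟩ := x
        refine ⟨g, i, z, hred.1 ⟨i, z⟩ (by simp), ?_⟩
        rw [heq, mk_singleton]
      · exfalso
        obtain ⟨n, hn1, hlt⟩ := hσ
        have hlen2 : 2 ≤ (x :: dl').length := by
          have : 0 < dl'.length := List.length_pos_iff.2 hd
          simp
          omega
        have hlow := pow_conj_lower (wlen g) g le_rfl (x :: dl') hred hlen2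
          (hcyc hlen2) n hn1
        have hpow : σ ^ n = g * (mk (x :: dl')) ^ n * g⁻¹ := by
          rw [heq, conj_pow_grp]
        rw [← hpow] at hlow
        omega

lemma head?_cw_cons (x : Σ i, G i) (a' : List (Σ i, G i)) (i : ι) (z : G i) :
    (cw (x::a') i z).head? = some x := rfl

lemma getLast?_cw_nil (i : ι) (z : G i) :
    (cw ([] : List (Σ i, G i)) i z).getLast? = some ⟨i, z⟩ := rfl

lemma getLast?_cw_cons (x : Σ i, G i) (a' : List (Σ i, G i)) (i : ι) (z : G i) :
    (cw (x::a') i z).getLast? = some (inva x) := by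
  have : cw (x::a') i z = ((x::a') ++ ⟨i,z⟩ :: invr a') ++ [inva x] := by
    simp [cw, invr_cons]
  rw [this, List.getLast?_concat]

lemma hne_contra {γ : CoprodI G}
    (hne : ∀ h : letters γ ≠ [], ((letters γ).head h).1 ≠ ((letters γ).getLast h).1)
    {ℓ : List (Σ i, G i)} (hγ : letters γ = ℓ) {p q : Σ i, G i}
    (hp : ℓ.head? = some p) (hq : ℓ.getLast? = some q) (hpq : p.1 = q.1) : False := by
  subst hγ
  have h1 : letters γ ≠ [] := by intro h; rw [h] at hp; simp at hp
  apply hne h1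
  have e1 : (letters γ).head h1 = p := by
    have := List.head?_eq_head h1 (l := letters γ)
    rw [this] at hp
    exact Option.some.inj hp
  have e2 : (letters γ).getLast h1 = q := by
    have := List.getLast?_eq_getLast h1
    rw [this] at hq
    exact Option.some.inj hq
  rw [e1, e2, hpq]

/-- the desired conclusion about `γ` -/
def Concl (γ : CoprodI G) : Prop :=
  ∃ (μ ν : CoprodI G) (i j : ι) (z₀ : G i) (z₁ : G j), z₀ ≠ 1 ∧ z₁ ≠ 1 ∧
      γ = μ * CoprodI.of z₀ * μ⁻¹ * (ν * CoprodI.of z₁ * ν⁻¹) ∧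
      wlen γ = (2 * wlen μ + 1) + (2 * wlen ν + 1)

lemma no_cancel {γ : CoprodI G} {a : List (Σ i, G i)} {i : ι} {z : G i}
    {b : List (Σ i, G i)} {j : ι} {w : G j}
    (ha : Red a) (hb : Red b) (hz : z ≠ 1) (hw : w ≠ 1)
    (hal : ∀ x ∈ a.getLast?, x.1 ≠ i) (hbl : ∀ x ∈ b.getLast?, x.1 ≠ j)
    (hJ : ∀ x ∈ (cw a i z).getLast?, ∀ y ∈ (cw b j w).head?, x.1 ≠ y.1)
    (hγ : γ = (mk a * CoprodI.of z * (mk a)⁻¹) * (mk b * CoprodI.of w * (mk b)⁻¹)) :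
    Concl γ := by
  have hred : Red (cw a i z ++ cw b j w) :=
    red_append.2 ⟨red_cw ha hz hal, red_cw hb hw hbl, hJ⟩
  have hγ' : γ = mk (cw a i z ++ cw b j w) := by
    rw [mk_append, mk_cw, mk_cw, hγ]
  refine ⟨mk a, mk b, i, j, z, w, hz, hw, ?_, ?_⟩
  · rw [hγ]
  · rw [hγ', wlen_mk _ hred, wlen_mk _ ha, wlen_mk _ hb]
    simp only [List.length_append, length_cw]

lemma middle_analysis {γ : CoprodI G}
    (hne : ∀ h : letters γ ≠ [], ((letters γ).head h).1 ≠ ((letters γ).getLast h).1)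
    (d M : List (Σ i, G i)) (hγ : γ = mk (d ++ (M ++ invr d)))
    (hd : Red d) (hM : Red M) (hMne : M ≠ [])
    (hJl : ∀ x ∈ d.getLast?, ∀ y ∈ M.head?, x.1 ≠ y.1)
    (hJr : ∀ x ∈ M.getLast?, ∀ y ∈ d.getLast?, x.1 ≠ y.1)
    (hsame : (∀ p ∈ M.head?, ∀ q ∈ M.getLast?, p.1 = q.1) ∨ d ≠ []) : False := by
  have hred : Red (d ++ (M ++ invr d)) := by
    refine red_append.2 ⟨hd, red_append.2 ⟨hM, red_invr hd, ?_⟩, ?_⟩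
    · intro x hx y hy
      rw [head?_invr] at hy
      obtain ⟨q, hq, rfl⟩ := Option.map_eq_some_iff.1 (Option.mem_def.1 hy)
      exact hJr x hx q hq
    · intro x hx y hy
      rw [head?_append_of_ne_nil' hMne] at hy
      exact hJl x hx y hy
  have hlet : letters γ = d ++ (M ++ invr d) := by rw [hγ, letters_mk _ hred]
  cases d with
  | nil =>
      rcases hsame with hsame | hne' 
      · simp only [invr_nil, List.append_nil, List.nil_append] at hlet
        have hMh : M.head? = some (M.head hMne) := List.head?_eq_head _
        have hMl : M.getLast? = some (M.getLast hMne) := List.getLast?_eq_getLast _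
        exact hne_contra hne hlet hMh hMl
          (hsame _ (Option.mem_def.2 hMh) _ (Option.mem_def.2 hMl))
      · exact hne' rfl
  | cons x d' =>
      have hih : (invr (x :: d')) ≠ [] := by
        intro h
        have := congrArg List.length h
        rw [length_invr] at this
        simp at this
      have hp : (x :: d' ++ (M ++ invr (x :: d'))).head? = some x := rfl
      have hq : ((x :: d') ++ (M ++ invr (x :: d'))).getLast? = some (inva x) := by
        rw [List.getLast?_append]
        rw [List.getLast?_append]
        rw [getLast?_invr]
        rw [List.head?_cons]
        rfl
      exact hne_contra hne hlet hp hq rfl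

lemma prefix_split : ∀ (a b : List (Σ i, G i)), ∃ d e f, a = d ++ e ∧ b = d ++ f ∧
    ∀ (he : e ≠ []) (hf : f ≠ []), e.head he ≠ f.head hf := by
  intro a
  induction a with
  | nil => intro b; exact ⟨[], [], b, rfl, rfl, fun he _ => absurd rfl he⟩
  | cons x a' ih =>
      intro b
      cases b with
      | nil => exact ⟨[], x::a', [], rfl, rfl, fun _ hf => absurd rfl hf⟩
      | cons y b' =>
          by_cases hxy : x = y
          · subst hxy
            obtain ⟨d, e, f, h1, h2, h3⟩ := ih b'
            exact ⟨x :: d, e, f, by rw [h1]; rfl, by rw [h2]; rfl, h3⟩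
          · exact ⟨[], x::a', y::b', rfl, rfl, fun _ _ => by simpa using hxy⟩

lemma mem_getLast?_append {d e : List (Σ i, G i)} {x : Σ i, G i} (hx : x ∈ e.getLast?) :
    x ∈ (d ++ e).getLast? := by
  rw [List.getLast?_append, Option.mem_def.1 hx]
  rfl

lemma getLast?_append_right' {l₁ l₂ : List (Σ i, G i)} (h : l₂ ≠ []) :
    (l₁ ++ l₂).getLast? = l₂.getLast? := by
  rw [List.getLast?_append, List.getLast?_eq_getLast h]
  rfl

/-- first letter of the conjugate word `cw a i z` -/
def fl (a : List (Σ i, G i)) (i : ι) (z : G i) : Σ i, G i :=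
  match a with
  | [] => ⟨i, z⟩
  | x :: _ => x

/-- last letter of the conjugate word `cw a i z` -/
def gl (a : List (Σ i, G i)) (i : ι) (z : G i) : Σ i, G i :=
  match a with
  | [] => ⟨i, z⟩
  | x :: _ => inva x

@[simp] lemma gl_fst (a : List (Σ i, G i)) (i : ι) (z : G i) :
    (gl a i z).1 = (fl a i z).1 := by
  cases a <;> rfl

lemma head?_cw (a : List (Σ i, G i)) (i : ι) (z : G i) :
    (cw a i z).head? = some (fl a i z) := by
  cases a <;> rfl

lemma getLast?_cw (a : List (Σ i, G i)) (i : ι) (z : G i) :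
    (cw a i z).getLast? = some (gl a i z) := by
  cases a with
  | nil => rfl
  | cons x a' => exact getLast?_cw_cons x a' i z

lemma main (N : ℕ) : ∀ (a b : List (Σ i, G i)) (i j : ι) (z : G i) (w : G j) (γ : CoprodI G),
    a.length + b.length ≤ N → Red a → Red b → z ≠ 1 → w ≠ 1 →
    (∀ x ∈ a.getLast?, x.1 ≠ i) → (∀ x ∈ b.getLast?, x.1 ≠ j) →
    γ = (mk a * CoprodI.of z * (mk a)⁻¹) * (mk b * CoprodI.of w * (mk b)⁻¹) →
    2 ≤ wlen γ →
    (∀ h : letters γ ≠ [], ((letters γ).head h).1 ≠ ((letters γ).getLast h).1) →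
    Concl γ := by
  induction N using Nat.strong_induction_on with
  | _ N ih =>
  intro a b i j z w γ hN ha hb hz hw hal hbl hγ hlen hne
  obtain ⟨d, e, f, rfl, rfl, hmax⟩ := prefix_split a b
  have hd : Red d := red_of_prefix ha
  have he : Red e := (red_append.1 ha).2.1
  have hf : Red f := (red_append.1 hb).2.1
  have hJde : J d e := (red_append.1 ha).2.2
  have hJdf : J d f := (red_append.1 hb).2.2
  have hale : ∀ x ∈ e.getLast?, x.1 ≠ i := fun x hx => hal x (mem_getLast?_append hx)
  have hblf : ∀ x ∈ f.getLast?, x.1 ≠ j := fun x hx => hbl x (mem_getLast?_append hx)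
  by_cases hclash : (gl e i z).1 = (fl f j w).1
  case neg =>
    -- the two conjugate words concatenate without cancellation
    have hJ : ∀ x ∈ (cw e i z).getLast?, ∀ y ∈ (cw f j w).head?, x.1 ≠ y.1 := by
      intro x hx y hy
      rw [getLast?_cw] at hx
      rw [head?_cw] at hy
      obtain rfl := (Option.some.inj (Option.mem_def.1 hx)).symm
      obtain rfl := (Option.some.inj (Option.mem_def.1 hy)).symm
      exact hclash
    have hdfl_e : ∀ x ∈ d.getLast?, x.1 ≠ (fl e i z).1 := by
      cases e with
      | nil =>
          intro x hx
          exact hal x (by rw [List.append_nil]; exact hx)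
      | cons p e' => intro x hx; exact hJde x hx p rfl
    have hdfl_f : ∀ x ∈ d.getLast?, x.1 ≠ (fl f j w).1 := by
      cases f with
      | nil =>
          intro x hx
          exact hbl x (by rw [List.append_nil]; exact hx)
      | cons p f' => intro x hx; exact hJdf x hx p rfl
    by_cases hdnil : d = []
    · subst hdnil
      simp only [List.nil_append] at hγ hal hbl
      exact no_cancel he hf hz hw hal hbl hJ hγ
    · exfalso
      have hcwne : cw e i z ≠ [] := by
        intro hh
        have := congrArg List.length hh
        rw [length_cw] at this
        simp at this
      refine middle_analysis hne d (cw e i z ++ cw f j w) ?_ hd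
        (red_append.2 ⟨red_cw he hz hale, red_cw hf hw hblf, hJ⟩)
        (by simp [hcwne]) ?_ ?_ (Or.inr hdnil)
      · rw [hγ]
        simp only [mk_append, mk_cw, mk_invr]
        group
      · intro x hx y hy
        rw [head?_append_of_ne_nil' hcwne, head?_cw] at hy
        obtain rfl := (Option.some.inj (Option.mem_def.1 hy)).symm
        exact hdfl_e x hx
      · intro x hx y hy
        rw [getLast?_append_right' (by
          intro hh
          have := congrArg List.length hh
          rw [length_cw] at this
          simp at this), getLast?_cw] at hx
        obtain rfl := (Option.some.inj (Option.mem_def.1 hx)).symm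
        rw [gl_fst]
        exact fun hh => hdfl_f y hy hh.symm
  case pos =>
  cases e with
  | nil =>
      cases f with
      | nil =>
          -- both trivial conjugators : i = j
          simp only [gl, fl] at hclash
          obtain rfl : i = j := hclash
          simp only [List.append_nil] at hγ hal hbl hN
          by_cases hzw : z * w = 1
          · exfalso
            have hw' : CoprodI.of w = (CoprodI.of z)⁻¹ := by
              have huz : w = z⁻¹ := by rw [← inv_mul_cancel_left z w, hzw, mul_one]
              rw [huz, MonoidHom.map_inv]
            have hγ1 : γ = 1 := by rw [hγ, hw']; group
            rw [hγ1, wlen_one] at hlen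
            omega
          · exfalso
            refine middle_analysis hne d [⟨i, z*w⟩] ?_ hd
              ⟨by simpa using hzw, List.isChain_singleton _⟩ (List.cons_ne_nil _ _)
              ?_ ?_ (Or.inl ?_)
            · rw [hγ]
              simp only [mk_append, mk_cons, mk_nil, mk_invr, map_mul, mul_one]
              group
            · intro x hx y hy
              rw [show ([⟨i, z*w⟩] : List (Σ i, G i)).head? = some ⟨i, z*w⟩ from rfl] at hy
              obtain rfl := (Option.some.inj (Option.mem_def.1 hy)).symm
              exact hal x hx
            · intro x hx y hy
              rw [show ([⟨i, z*w⟩] : List (Σ i, G i)).getLast? = some ⟨i, z*w⟩ from rfl] at hx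
              obtain rfl := (Option.some.inj (Option.mem_def.1 hx)).symm
              exact fun hh => hal y hy hh.symm
            · intro p hp q hq
              rw [show ([⟨i, z*w⟩] : List (Σ i, G i)).head? = some ⟨i, z*w⟩ from rfl] at hp
              rw [show ([⟨i, z*w⟩] : List (Σ i, G i)).getLast? = some ⟨i, z*w⟩ from rfl] at hq
              obtain rfl := (Option.some.inj (Option.mem_def.1 hp)).symm
              obtain rfl := (Option.some.inj (Option.mem_def.1 hq)).symm
              rfl

      | cons y f' =>
          -- z cancels or merges with head of f
          obtain ⟨ky, u⟩ := y
          simp only [gl, fl] at hclash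
          obtain rfl : i = ky := hclash
          simp only [List.append_nil] at hγ hal hN
          have hu1 : u ≠ 1 := hf.1 ⟨i,u⟩ (by simp)
          have hchf : ∀ q ∈ f'.head?, (⟨i, u⟩ : Σ i, G i).1 ≠ q.1 :=
            (List.isChain_cons.1 hf.2).1
          have hblf' : ∀ x ∈ f'.getLast?, x.1 ≠ j :=
            fun x hx => hblf x (List.mem_getLast?_cons hx)
          by_cases hzu : z * u = 1
          · -- cancellation: recurse with smaller words
            have hofu : CoprodI.of u = (CoprodI.of z)⁻¹ := by
              have huz : u = z⁻¹ := by rw [← inv_mul_cancel_left z u, hzu, mul_one]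
              rw [huz, MonoidHom.map_inv]
            have hγ2 : γ = ((mk d * mk f') * CoprodI.of w * (mk d * mk f')⁻¹) *
                (mk d * CoprodI.of z * (mk d)⁻¹) := by
              rw [hγ]
              simp only [mk_append, mk_cons]
              rw [hofu]
              group
            obtain ⟨c, j', u', hc, hu'1, hcl, hceq, hclen⟩ :=
              conj_form (wlen (mk d * mk f')) (mk d * mk f') le_rfl j w hw
            have hglen : wlen (mk d * mk f') ≤ d.length + f'.length := by
              calc wlen (mk d * mk f') ≤ wlen (mk d) + wlen (mk f') := wlen_mul_le _ _
                _ = d.length + f'.length := by rw [wlen_mk _ hd, wlen_mk _ (red_tail hf)]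
            have hNlen : (d ++ ⟨i,u⟩::f' : List (Σ i, G i)).length
                = d.length + f'.length + 1 := by simp; omega
            rw [hNlen] at hN
            exact ih (c.length + d.length) (by omega) c d j' i u' z γ le_rfl hc hd
              hu'1 hz hcl hal (by rw [hγ2, hceq]) hlen hne
          · -- amalgamation: contradiction with hne
            exfalso
            have hjne : ∀ y ∈ (invr f' ++ [⟨i, u⁻¹⟩] : List (Σ i, G i)).head?, j ≠ y.1 := by
              intro y hy
              rw [List.head?_append] at hy
              rcases Option.or_eq_some_iff.1 (Option.mem_def.1 hy) with h' | ⟨hnone, h'⟩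
              · rw [head?_invr] at h'
                obtain ⟨q, hq, rfl⟩ := Option.map_eq_some_iff.1 h'
                exact fun hh => hblf' q hq hh.symm
              · have hf'nil : f' = [] := by
                  have h0 : invr f' = [] := List.head?_eq_none_iff.1 hnone
                  have := congrArg List.length h0
                  rw [length_invr] at this
                  exact List.length_eq_zero_iff.1 this
                subst hf'nil
                obtain rfl := (Option.some.inj h').symm
                have : i ≠ j := hblf ⟨i,u⟩ rfl
                exact fun hh => this hh.symm
            have hine : ∀ y ∈ (f' ++ (⟨j,w⟩ :: (invr f' ++ [⟨i, u⁻¹⟩]))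
                : List (Σ i, G i)).head?, (⟨i, z*u⟩ : Σ i, G i).1 ≠ y.1 := by
              intro y hy
              rw [List.head?_append] at hy
              rcases Option.or_eq_some_iff.1 (Option.mem_def.1 hy) with h' | ⟨hnone, h'⟩
              · exact hchf y h'
              · have hf'nil : f' = [] := List.head?_eq_none_iff.1 hnone
                subst hf'nil
                obtain rfl := (Option.some.inj h').symm
                exact hblf ⟨i,u⟩ rfl
            have hIRed : Red (invr f' ++ [⟨i, u⁻¹⟩]) := by
              refine red_append.2 ⟨red_invr (red_tail hf),
                ⟨by simpa using inv_ne_one.2 hu1, List.isChain_singleton _⟩, ?_⟩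
              intro x hx y hy
              rw [getLast?_invr] at hx
              obtain ⟨q, hq, rfl⟩ := Option.map_eq_some_iff.1 (Option.mem_def.1 hx)
              obtain rfl := (Option.some.inj (Option.mem_def.1 hy)).symm
              exact fun hh => hchf q hq hh.symm
            have hR : Red (⟨j,w⟩ :: (invr f' ++ [⟨i, u⁻¹⟩])) := red_cons hw hIRed hjne
            have hS : Red (f' ++ (⟨j,w⟩ :: (invr f' ++ [⟨i, u⁻¹⟩]))) := by
              refine red_append.2 ⟨red_tail hf, hR, ?_⟩
              intro x hx y hy
              obtain rfl := (Option.some.inj (Option.mem_def.1 hy)).symm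
              exact hblf' x hx
            have hMred : Red (⟨i, z*u⟩ :: (f' ++ (⟨j,w⟩ :: (invr f' ++ [⟨i, u⁻¹⟩])))) :=
              red_cons hzu hS hine
            have hMl : (⟨i, z*u⟩ :: (f' ++ (⟨j,w⟩ :: (invr f' ++ [⟨i, u⁻¹⟩])))
                : List (Σ i, G i)).getLast? = some ⟨i, u⁻¹⟩ := by
              rw [getLast?_cons_of_ne_nil _ (by simp), getLast?_append_right'
                (List.cons_ne_nil _ _), getLast?_cons_of_ne_nil _ (by simp),
                List.getLast?_concat]
            refine middle_analysis hne d _ ?_ hd hMred (List.cons_ne_nil _ _) ?_ ?_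
              (Or.inl ?_)
            · rw [hγ]
              simp only [mk_append, mk_cons, mk_invr, mk_singleton, map_mul, map_inv,
                mul_one, mk_nil]
              group
            · intro x hx y hy
              obtain rfl := (Option.some.inj (Option.mem_def.1 hy)).symm
              exact hal x hx
            · intro x hx y hy
              rw [hMl] at hx
              obtain rfl := (Option.some.inj (Option.mem_def.1 hx)).symm
              exact fun hh => hal y hy hh.symm
            · intro p hp q hq
              rw [hMl] at hq
              obtain rfl := (Option.some.inj (Option.mem_def.1 hp)).symm
              obtain rfl := (Option.some.inj (Option.mem_def.1 hq)).symm
              rfl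

  | cons x e' =>
      cases f with
      | nil =>
          obtain ⟨kx, v⟩ := x
          simp only [gl, fl, inva] at hclash
          obtain rfl : kx = j := hclash
          simp only [List.append_nil] at hγ hbl hN
          have hv1 : v ≠ 1 := he.1 ⟨kx,v⟩ (by simp)
          have hche : ∀ q ∈ e'.head?, (⟨kx, v⟩ : Σ i, G i).1 ≠ q.1 :=
            (List.isChain_cons.1 he.2).1
          have hale' : ∀ x ∈ e'.getLast?, x.1 ≠ i :=
            fun x hx => hale x (List.mem_getLast?_cons hx)
          by_cases hvw : v⁻¹ * w = 1
          · -- cancellation: recurse with smaller words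
            have hofw : CoprodI.of w = CoprodI.of v := by
              have hwv : w = v := by rw [← mul_inv_cancel_left v w, hvw, mul_one]
              rw [hwv]
            have hγ2 : γ = (mk d * CoprodI.of v * (mk d)⁻¹) *
                ((mk d * mk e') * CoprodI.of z * (mk d * mk e')⁻¹) := by
              rw [hγ, hofw]
              simp only [mk_append, mk_cons]
              group
            obtain ⟨c, j', u', hc, hu'1, hcl, hceq, hclen⟩ :=
              conj_form (wlen (mk d * mk e')) (mk d * mk e') le_rfl i z hz
            have hglen : wlen (mk d * mk e') ≤ d.length + e'.length := by
              calc wlen (mk d * mk e') ≤ wlen (mk d) + wlen (mk e') := wlen_mul_le _ _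
                _ = d.length + e'.length := by rw [wlen_mk _ hd, wlen_mk _ (red_tail he)]
            have hNlen : (d ++ ⟨kx,v⟩::e' : List (Σ i, G i)).length
                = d.length + e'.length + 1 := by simp; omega
            rw [hNlen] at hN
            exact ih (d.length + c.length) (by omega) d c kx j' v u' γ le_rfl hd hc
              hv1 hu'1 hbl hcl (by rw [hγ2, hceq]) hlen hne
          · -- amalgamation: contradiction with hne
            exfalso
            have hicond : ∀ y ∈ (invr e' ++ [⟨kx, v⁻¹ * w⟩] : List (Σ i, G i)).head?,
                (⟨i, z⟩ : Σ i, G i).1 ≠ y.1 := by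
              intro y hy
              rw [List.head?_append] at hy
              rcases Option.or_eq_some_iff.1 (Option.mem_def.1 hy) with h' | ⟨hnone, h'⟩
              · rw [head?_invr] at h'
                obtain ⟨q, hq, rfl⟩ := Option.map_eq_some_iff.1 h'
                exact fun hh => hale' q hq hh.symm
              · have he'nil : e' = [] := by
                  have h0 : invr e' = [] := List.head?_eq_none_iff.1 hnone
                  have := congrArg List.length h0
                  rw [length_invr] at this
                  exact List.length_eq_zero_iff.1 this
                subst he'nil
                obtain rfl := (Option.some.inj h').symm
                exact fun hh => hale ⟨kx,v⟩ rfl hh.symm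
            have hIRed : Red (invr e' ++ [⟨kx, v⁻¹ * w⟩]) := by
              refine red_append.2 ⟨red_invr (red_tail he),
                ⟨by simpa using hvw, List.isChain_singleton _⟩, ?_⟩
              intro x hx y hy
              rw [getLast?_invr] at hx
              obtain ⟨q, hq, rfl⟩ := Option.map_eq_some_iff.1 (Option.mem_def.1 hx)
              obtain rfl := (Option.some.inj (Option.mem_def.1 hy)).symm
              exact fun hh => hche q hq hh.symm
            have hR : Red (⟨i,z⟩ :: (invr e' ++ [⟨kx, v⁻¹ * w⟩])) := red_cons hz hIRed hicond
            have hMred : Red ((⟨kx,v⟩ :: e') ++ (⟨i,z⟩ :: (invr e' ++ [⟨kx, v⁻¹ * w⟩]))) := by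
              refine red_append.2 ⟨he, hR, ?_⟩
              intro x hx y hy
              obtain rfl := (Option.some.inj (Option.mem_def.1 hy)).symm
              exact hale x hx
            have hMh : ((⟨kx,v⟩ :: e') ++ (⟨i,z⟩ :: (invr e' ++ [⟨kx, v⁻¹ * w⟩]))
                : List (Σ i, G i)).head? = some ⟨kx,v⟩ := by
              rw [head?_append_of_ne_nil' (List.cons_ne_nil _ _)]
              rfl
            have hMl : ((⟨kx,v⟩ :: e') ++ (⟨i,z⟩ :: (invr e' ++ [⟨kx, v⁻¹ * w⟩]))
                : List (Σ i, G i)).getLast? = some ⟨kx, v⁻¹ * w⟩ := by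
              rw [getLast?_append_right' (List.cons_ne_nil _ _),
                getLast?_cons_of_ne_nil _ (by simp), List.getLast?_concat]
            refine middle_analysis hne d _ ?_ hd hMred (by simp) ?_ ?_ (Or.inl ?_)
            · rw [hγ]
              simp only [mk_append, mk_cons, mk_invr, mk_singleton, map_mul, map_inv,
                mul_one, mk_nil]
              group
            · intro x hx y hy
              rw [hMh] at hy
              obtain rfl := (Option.some.inj (Option.mem_def.1 hy)).symm
              exact hJde x hx ⟨kx,v⟩ rfl
            · intro x hx y hy
              rw [hMl] at hx
              obtain rfl := (Option.some.inj (Option.mem_def.1 hx)).symm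
              exact fun hh => hbl y hy hh.symm
            · intro p hp q hq
              rw [hMh] at hp
              rw [hMl] at hq
              obtain rfl := (Option.some.inj (Option.mem_def.1 hp)).symm
              obtain rfl := (Option.some.inj (Option.mem_def.1 hq)).symm
              rfl

      | cons y f' =>
          obtain ⟨kx, v⟩ := x
          obtain ⟨ky, u⟩ := y
          simp only [gl, fl, inva] at hclash
          obtain rfl : kx = ky := hclash
          have hv1 : v ≠ 1 := he.1 ⟨kx,v⟩ (by simp)
          have hu1 : u ≠ 1 := hf.1 ⟨kx,u⟩ (by simp)
          have hche : ∀ q ∈ e'.head?, (⟨kx, v⟩ : Σ i, G i).1 ≠ q.1 :=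
            (List.isChain_cons.1 he.2).1
          have hchf : ∀ q ∈ f'.head?, (⟨kx, u⟩ : Σ i, G i).1 ≠ q.1 :=
            (List.isChain_cons.1 hf.2).1
          have hale' : ∀ x ∈ e'.getLast?, x.1 ≠ i :=
            fun x hx => hale x (List.mem_getLast?_cons hx)
          have hblf' : ∀ x ∈ f'.getLast?, x.1 ≠ j :=
            fun x hx => hblf x (List.mem_getLast?_cons hx)
          have hvu : v⁻¹ * u ≠ 1 := by
            intro hh
            have huv : u = v := by rw [← mul_inv_cancel_left v u, hh, mul_one]
            exact hmax (List.cons_ne_nil _ _) (List.cons_ne_nil _ _)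
              (by simp only [List.head_cons]; rw [huv])
          exfalso
          have hS2 : Red (⟨j,w⟩ :: invr (⟨kx,u⟩::f')) := by
            refine red_cons hw (red_invr hf) ?_
            intro y hy
            rw [head?_invr] at hy
            obtain ⟨q, hq, rfl⟩ := Option.map_eq_some_iff.1 (Option.mem_def.1 hy)
            exact fun hh => hblf q hq hh.symm
          have hS3 : Red (f' ++ (⟨j,w⟩ :: invr (⟨kx,u⟩::f'))) := by
            refine red_append.2 ⟨red_tail hf, hS2, ?_⟩
            intro x hx y hy
            obtain rfl := (Option.some.inj (Option.mem_def.1 hy)).symm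
            exact hblf' x hx
          have hS4 : Red (⟨kx, v⁻¹*u⟩ :: (f' ++ (⟨j,w⟩ :: invr (⟨kx,u⟩::f')))) := by
            refine red_cons hvu hS3 ?_
            intro y hy
            rw [List.head?_append] at hy
            rcases Option.or_eq_some_iff.1 (Option.mem_def.1 hy) with h' | ⟨hnone, h'⟩
            · exact hchf y h'
            · have hf0 : f' = [] := List.head?_eq_none_iff.1 hnone
              subst hf0
              obtain rfl := (Option.some.inj h').symm
              exact hblf ⟨kx,u⟩ rfl
          have hS5 : Red (invr e' ++ (⟨kx, v⁻¹*u⟩ :: (f' ++ (⟨j,w⟩ :: invr (⟨kx,u⟩::f'))))) := by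
            refine red_append.2 ⟨red_invr (red_tail he), hS4, ?_⟩
            intro x hx y hy
            rw [getLast?_invr] at hx
            obtain ⟨q, hq, rfl⟩ := Option.map_eq_some_iff.1 (Option.mem_def.1 hx)
            obtain rfl := (Option.some.inj (Option.mem_def.1 hy)).symm
            exact fun hh => hche q hq hh.symm
          have hS6 : Red (⟨i,z⟩ :: (invr e' ++ (⟨kx, v⁻¹*u⟩ ::
              (f' ++ (⟨j,w⟩ :: invr (⟨kx,u⟩::f')))))) := by
            refine red_cons hz hS5 ?_
            intro y hy
            rw [List.head?_append] at hy
            rcases Option.or_eq_some_iff.1 (Option.mem_def.1 hy) with h' | ⟨hnone, h'⟩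
            · rw [head?_invr] at h'
              obtain ⟨q, hq, rfl⟩ := Option.map_eq_some_iff.1 h'
              exact fun hh => hale' q hq hh.symm
            · have he0 : e' = [] := by
                have h0' : invr e' = [] := List.head?_eq_none_iff.1 hnone
                have := congrArg List.length h0'
                rw [length_invr] at this
                exact List.length_eq_zero_iff.1 this
              subst he0
              obtain rfl := (Option.some.inj h').symm
              exact fun hh => hale ⟨kx,v⟩ rfl hh.symm
          have hMred : Red ((⟨kx,v⟩::e') ++ (⟨i,z⟩ :: (invr e' ++ (⟨kx, v⁻¹*u⟩ ::
              (f' ++ (⟨j,w⟩ :: invr (⟨kx,u⟩::f'))))))) := by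
            refine red_append.2 ⟨he, hS6, ?_⟩
            intro x hx y hy
            obtain rfl := (Option.some.inj (Option.mem_def.1 hy)).symm
            exact hale x hx
          have hMh : ((⟨kx,v⟩::e') ++ (⟨i,z⟩ :: (invr e' ++ (⟨kx, v⁻¹*u⟩ ::
              (f' ++ (⟨j,w⟩ :: invr (⟨kx,u⟩::f')))))) : List (Σ i, G i)).head?
              = some ⟨kx,v⟩ := by
            rw [head?_append_of_ne_nil' (List.cons_ne_nil _ _)]
            rfl
          have hinvne : invr (⟨kx,u⟩::f' : List (Σ i, G i)) ≠ [] := by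
            intro hh
            have := congrArg List.length hh
            rw [length_invr] at this
            simp at this
          have hMl : ((⟨kx,v⟩::e') ++ (⟨i,z⟩ :: (invr e' ++ (⟨kx, v⁻¹*u⟩ ::
              (f' ++ (⟨j,w⟩ :: invr (⟨kx,u⟩::f')))))) : List (Σ i, G i)).getLast?
              = some ⟨kx, u⁻¹⟩ := by
            rw [getLast?_append_right' (List.cons_ne_nil _ _),
              getLast?_cons_of_ne_nil _ (by simp),
              getLast?_append_right' (List.cons_ne_nil _ _),
              getLast?_cons_of_ne_nil _ (by simp),
              getLast?_append_right' (List.cons_ne_nil _ _),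
              getLast?_cons_of_ne_nil _ hinvne,
              getLast?_invr]
            rfl
          refine middle_analysis hne d _ ?_ hd hMred (by simp) ?_ ?_ (Or.inl ?_)
          · rw [hγ]
            simp only [mk_append, mk_cons, mk_invr, mk_singleton, map_mul, map_inv,
              mul_one, mk_nil]
            group
          · intro x hx y hy
            rw [hMh] at hy
            obtain rfl := (Option.some.inj (Option.mem_def.1 hy)).symm
            exact hJde x hx ⟨kx,v⟩ rfl
          · intro x hx y hy
            rw [hMl] at hx
            obtain rfl := (Option.some.inj (Option.mem_def.1 hx)).symm
            exact fun hh => hJdf y hy ⟨kx,u⟩ rfl hh.symm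
          · intro p hp q hq
            rw [hMh] at hp
            rw [hMl] at hq
            obtain rfl := (Option.some.inj (Option.mem_def.1 hp)).symm
            obtain rfl := (Option.some.inj (Option.mem_def.1 hq)).symm
            rfl


lemma conj_letter_contra (γ : CoprodI G) (hlen : 2 ≤ wlen γ)
    (hne : ∀ h : letters γ ≠ [], ((letters γ).head h).1 ≠ ((letters γ).getLast h).1)
    (g : CoprodI G) (i0 : ι) (z0 : G i0) (hz0 : z0 ≠ 1)
    (hγeq : γ = g * CoprodI.of z0 * g⁻¹) : False := by
  obtain ⟨c, j', u', hc, hu', hcl, hceq, _⟩ := conj_form (wlen g) g le_rfl i0 z0 hz0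
  have hγc : γ = mk (cw c j' u') := by rw [hγeq, hceq, mk_cw]
  have hred := red_cw hc hu' hcl
  have hlet : letters γ = cw c j' u' := by rw [hγc, letters_mk _ hred]
  cases c with
  | nil =>
      rw [hγc, wlen_mk _ hred, length_cw] at hlen
      simp at hlen
  | cons x c' =>
      exact hne_contra hne hlet (head?_cw_cons x c' j' u') (getLast?_cw_cons x c' j' u') rfl

end FP

/-- If `γ ∈ S_Γᶜ ⬝ S_Γᶜ` has reduced form `x₁⋯xₙ`, `n ≥ 2`, with `x₁` and `xₙ` in
different factors, then the reduced form of `γ` can be written (as a reduced product) as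
`μ z₀ μ⁻¹ ν z₁ ν⁻¹` for non-trivial letters `z₀, z₁`. -/
theorem FP.asymmetric_mem_S_compl_sq {ι : Type*} (G : ι → Type*)
    [∀ i, Group (G i)] [∀ i, Nontrivial (G i)] (γ σ τ : CoprodI G)
    (hσ : ∃ n : ℕ, 1 ≤ n ∧ FP.wlen (σ ^ n) < n)
    (hτ : ∃ n : ℕ, 1 ≤ n ∧ FP.wlen (τ ^ n) < n)
    (hγ : γ = σ * τ)
    (hlen : 2 ≤ FP.wlen γ)
    (hne : ∀ h : FP.letters γ ≠ [],
      ((FP.letters γ).head h).1 ≠ ((FP.letters γ).getLast h).1) :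
    ∃ (μ ν : CoprodI G) (i j : ι) (z₀ : G i) (z₁ : G j), z₀ ≠ 1 ∧ z₁ ≠ 1 ∧
      γ = μ * CoprodI.of z₀ * μ⁻¹ * (ν * CoprodI.of z₁ * ν⁻¹) ∧
      FP.wlen γ = (2 * FP.wlen μ + 1) + (2 * FP.wlen ν + 1) := by
  rcases FP.sc_char σ hσ with rfl | ⟨g1, i0, z0, hz0, hσeq⟩
  · rcases FP.sc_char τ hτ with rfl | ⟨g2, j0, z1, hz1, hτeq⟩
    · exfalso
      rw [hγ, one_mul, FP.wlen_one] at hlen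
      omega
    · exfalso
      rw [one_mul] at hγ
      exact FP.conj_letter_contra γ hlen hne g2 j0 z1 hz1 (hγ.trans hτeq)
  · rcases FP.sc_char τ hτ with rfl | ⟨g2, j0, z1, hz1, hτeq⟩
    · exfalso
      rw [mul_one] at hγ
      exact FP.conj_letter_contra γ hlen hne g1 i0 z0 hz0 (hγ.trans hσeq)
    · obtain ⟨a, i', z', ha, hz', hal, haeq, _⟩ :=
        FP.conj_form (FP.wlen g1) g1 le_rfl i0 z0 hz0
      obtain ⟨b, j', w', hb, hw', hbl, hbeq, _⟩ :=
        FP.conj_form (FP.wlen g2) g2 le_rfl j0 z1 hz1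
      have hγ2 : γ = (FP.mk a * CoprodI.of z' * (FP.mk a)⁻¹) *
          (FP.mk b * CoprodI.of w' * (FP.mk b)⁻¹) := by
        rw [hγ, hσeq, hτeq, haeq, hbeq]
      exact FP.main (a.length + b.length) a b i' j' z' w' γ le_rfl ha hb hz' hw'
        hal hbl hγ2 hlen hne
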